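/- Let φ: (P',H') → (P,H) be a prolongation of Pfaffian fibrations. Then the fattened distribution H̄' := H' + ker(dφ) is a Pfaffian distribution on P' (constant rank, π'-transversal, with Frobenius-involutive symbol ker(dφ)), and φ: (P', H̄') → (P,H) is a normalised prolongation, i.e. g(H̄') = ker(dφ). -/

import Mathlib

/-!
STATEMENT 16: If φ : (P',H') → (P,H) is a prolongation of Pfaffian fibrations, then the
fattened distribution H̄' := H' + ker(dφ) is a Pfaffian distribution on P' (of constant
rank, π'-transversal, with Frobenius-involutive symbol ker(dφ)), and
φ : (P',H̄') → (P,H) is a normalised prolongation, i.e. g(H̄') = ker(dφ).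

Local model: fibrations are (charts of) smooth surjective submersions between
finite-dimensional spaces; tangent spaces are the ambient spaces; distributions are
families of subspaces; `⁅X,Y⁆ = (dY)(X) − (dX)(Y)`; the curvature condition
`κ_H(dφ(u),dφ(v)) = 0` is expressed via extensions to vector fields tangent to `H`.
-/

variable {P' P M : Type*}
  [NormedAddCommGroup P'] [NormedSpace ℝ P'] [FiniteDimensional ℝ P']
  [NormedAddCommGroup P] [NormedSpace ℝ P] [FiniteDimensional ℝ P]
  [NormedAddCommGroup M] [NormedSpace ℝ M] [FiniteDimensional ℝ M]

/-- Lie bracket of vector fields (local model). -/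
noncomputable def lieB {Q : Type*} [NormedAddCommGroup Q] [NormedSpace ℝ Q]
    (X Y : Q → Q) : Q → Q :=
  fun p => fderiv ℝ Y p (X p) - fderiv ℝ X p (Y p)

/-- `(π, H)` is a Pfaffian fibration. -/
def IsPfaffianFibrationH {P M : Type*}
    [NormedAddCommGroup P] [NormedSpace ℝ P] [NormedAddCommGroup M] [NormedSpace ℝ M]
    (π : P → M) (H : P → Submodule ℝ P) : Prop :=
  ContDiff ℝ (⊤ : ℕ∞) π ∧ Function.Surjective π ∧
  (∀ p, Function.Surjective (fderiv ℝ π p)) ∧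
  (∀ p, H p ⊔ LinearMap.ker (fderiv ℝ π p : P →ₗ[ℝ] M) = ⊤) ∧
  (∀ X Y : P → P, ContDiff ℝ (⊤ : ℕ∞) X → ContDiff ℝ (⊤ : ℕ∞) Y →
    (∀ p, X p ∈ H p ⊓ LinearMap.ker (fderiv ℝ π p : P →ₗ[ℝ] M)) →
    (∀ p, Y p ∈ H p ⊓ LinearMap.ker (fderiv ℝ π p : P →ₗ[ℝ] M)) →
    ∀ p, lieB X Y p ∈ H p ⊓ LinearMap.ker (fderiv ℝ π p : P →ₗ[ℝ] M))

lemma ker_brack {Q R : Type*} [NormedAddCommGroup Q] [NormedSpace ℝ Q]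
    [NormedAddCommGroup R] [NormedSpace ℝ R]
    (φ : Q → R) (hφ : ContDiff ℝ (⊤ : ℕ∞) φ) (X Y : Q → Q)
    (hX : ContDiff ℝ (⊤ : ℕ∞) X) (hY : ContDiff ℝ (⊤ : ℕ∞) Y)
    (hXk : ∀ p, fderiv ℝ φ p (X p) = 0) (hYk : ∀ p, fderiv ℝ φ p (Y p) = 0) (p : Q) :
    fderiv ℝ φ p (lieB X Y p) = 0 := by
  have hφ' : ContDiff ℝ (⊤ : ℕ∞) (fderiv ℝ φ) := hφ.fderiv_right (by simp)
  have hdφ : DifferentiableAt ℝ (fderiv ℝ φ) p := (hφ'.differentiable (by simp)) p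
  have key : ∀ (A B : Q → Q), ContDiff ℝ (⊤ : ℕ∞) A → (∀ q, fderiv ℝ φ q (A q) = 0) → ∀ v : Q,
      fderiv ℝ φ p (fderiv ℝ A p v) + fderiv ℝ (fderiv ℝ φ) p v (A p) = 0 := by
    intro A B hA hAk v
    have hF : (fun q => fderiv ℝ φ q (A q)) = fun _ => (0 : R) := funext hAk
    have hdF : fderiv ℝ (fun q => fderiv ℝ φ q (A q)) p = 0 := by
      rw [hF]; exact fderiv_const_apply 0
    rw [fderiv_clm_apply hdφ ((hA.differentiable (by simp)) p)] at hdF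
    have := congrArg (fun L : Q →L[ℝ] R => L v) hdF
    simpa using this
  have sym : fderiv ℝ (fderiv ℝ φ) p (Y p) (X p) = fderiv ℝ (fderiv ℝ φ) p (X p) (Y p) :=
    (hφ.contDiffAt.isSymmSndFDerivAt (by rw [minSmoothness_of_isRCLikeNormedField]; exact WithTop.coe_le_coe.mpr le_top)) (Y p) (X p)
  have h1 := key X X hX hXk (Y p)
  have h2 := key Y Y hY hYk (X p)
  have e1 : fderiv ℝ φ p (fderiv ℝ Y p (X p)) = - fderiv ℝ (fderiv ℝ φ) p (X p) (Y p) :=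
    eq_neg_of_add_eq_zero_left h2
  have e2 : fderiv ℝ φ p (fderiv ℝ X p (Y p)) = - fderiv ℝ (fderiv ℝ φ) p (Y p) (X p) :=
    eq_neg_of_add_eq_zero_left h1
  simp only [lieB, map_sub, e1, e2, sym, sub_self]

theorem fattened_distribution_is_normalised_prolongation
    (π' : P' → M) (H' : P' → Submodule ℝ P')
    (π : P → M) (H : P → Submodule ℝ P)
    (hP' : IsPfaffianFibrationH π' H') (hP : IsPfaffianFibrationH π H)
    -- φ is a Pfaffian morphism ...
    (φ : P' → P) (hφ : ContDiff ℝ (⊤ : ℕ∞) φ) (hbase : π ∘ φ = π')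
    (hφsurj : Function.Surjective φ) (hφsub : ∀ p', Function.Surjective (fderiv ℝ φ p'))
    (hmor : ∀ (p' : P') (u : P'), u ∈ H' p' → fderiv ℝ φ p' u ∈ H (φ p'))
    -- ... which is a prolongation: g(H') ⊂ ker dφ and κ_H(dφ(u),dφ(v)) = 0 on H'
    (hsymb : ∀ (p' : P') (u : P'), u ∈ H' p' → fderiv ℝ π' p' u = 0 → fderiv ℝ φ p' u = 0)
    (hcurv : ∀ (p' : P') (u v : P'), u ∈ H' p' → v ∈ H' p' →
      ∀ U W : P → P, ContDiff ℝ (⊤ : ℕ∞) U → ContDiff ℝ (⊤ : ℕ∞) W →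
        (∀ q, U q ∈ H q) → (∀ q, W q ∈ H q) →
        U (φ p') = fderiv ℝ φ p' u → W (φ p') = fderiv ℝ φ p' v →
        lieB U W (φ p') ∈ H (φ p')) :
    -- H̄' = H' + ker dφ is a Pfaffian distribution making φ a normalised prolongation:
    -- constant rank,
    (∃ r : ℕ, ∀ p' : P',
        Module.finrank ℝ ↥(H' p' ⊔ LinearMap.ker (fderiv ℝ φ p' : P' →ₗ[ℝ] P)) = r) ∧
    -- π'-transversal,
    (∀ p' : P',
        (H' p' ⊔ LinearMap.ker (fderiv ℝ φ p' : P' →ₗ[ℝ] P)) ⊔ LinearMap.ker (fderiv ℝ π' p' : P' →ₗ[ℝ] M) = ⊤) ∧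
    -- with symbol g(H̄') equal to ker dφ (normalised),
    (∀ p' : P',
        (H' p' ⊔ LinearMap.ker (fderiv ℝ φ p' : P' →ₗ[ℝ] P)) ⊓ LinearMap.ker (fderiv ℝ π' p' : P' →ₗ[ℝ] M)
          = LinearMap.ker (fderiv ℝ φ p' : P' →ₗ[ℝ] P)) ∧
    -- which is Frobenius involutive,
    (∀ X Y : P' → P', ContDiff ℝ (⊤ : ℕ∞) X → ContDiff ℝ (⊤ : ℕ∞) Y →
        (∀ p', X p' ∈ LinearMap.ker (fderiv ℝ φ p' : P' →ₗ[ℝ] P)) →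
        (∀ p', Y p' ∈ LinearMap.ker (fderiv ℝ φ p' : P' →ₗ[ℝ] P)) →
        ∀ p', lieB X Y p' ∈ LinearMap.ker (fderiv ℝ φ p' : P' →ₗ[ℝ] P)) ∧
    -- and φ : (P',H̄') → (P,H) is still a Pfaffian morphism and a prolongation:
    (∀ (p' : P') (u : P'), u ∈ H' p' ⊔ LinearMap.ker (fderiv ℝ φ p' : P' →ₗ[ℝ] P) →
        fderiv ℝ φ p' u ∈ H (φ p')) ∧
    (∀ (p' : P') (u v : P'),
        u ∈ H' p' ⊔ LinearMap.ker (fderiv ℝ φ p' : P' →ₗ[ℝ] P) →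
        v ∈ H' p' ⊔ LinearMap.ker (fderiv ℝ φ p' : P' →ₗ[ℝ] P) →
        ∀ U W : P → P, ContDiff ℝ (⊤ : ℕ∞) U → ContDiff ℝ (⊤ : ℕ∞) W →
          (∀ q, U q ∈ H q) → (∀ q, W q ∈ H q) →
          U (φ p') = fderiv ℝ φ p' u → W (φ p') = fderiv ℝ φ p' v →
          lieB U W (φ p') ∈ H (φ p')) := by
  have chain : ∀ p' : P', fderiv ℝ π' p' = (fderiv ℝ π (φ p')).comp (fderiv ℝ φ p') := by
    intro p'
    rw [← hbase]
    exact fderiv_comp p' ((hP.1.differentiable (by simp)) (φ p')) ((hφ.differentiable (by simp)) p')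
  have kerle : ∀ p' : P',
      LinearMap.ker (fderiv ℝ φ p' : P' →ₗ[ℝ] P) ≤ LinearMap.ker (fderiv ℝ π' p' : P' →ₗ[ℝ] M) := by
    intro p' u hu
    have hu0 : fderiv ℝ φ p' u = 0 := hu
    show fderiv ℝ π' p' u = 0
    rw [chain p']
    simp [hu0]
  have trans : ∀ p' : P',
      (H' p' ⊔ LinearMap.ker (fderiv ℝ φ p' : P' →ₗ[ℝ] P)) ⊔ LinearMap.ker (fderiv ℝ π' p' : P' →ₗ[ℝ] M) = ⊤ := by
    intro p'
    rw [eq_top_iff, ← hP'.2.2.2.1 p']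
    exact sup_le_sup_right le_sup_left _
  have symbEq : ∀ p' : P',
      (H' p' ⊔ LinearMap.ker (fderiv ℝ φ p' : P' →ₗ[ℝ] P)) ⊓ LinearMap.ker (fderiv ℝ π' p' : P' →ₗ[ℝ] M)
        = LinearMap.ker (fderiv ℝ φ p' : P' →ₗ[ℝ] P) := by
    intro p'
    apply le_antisymm
    · rintro u ⟨hu1, hu2⟩
      obtain ⟨h, hh, k, hk, rfl⟩ := Submodule.mem_sup.mp hu1
      have hk0 : fderiv ℝ φ p' k = 0 := hk
      have hkπ : fderiv ℝ π' p' k = 0 := kerle p' hk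
      have huπ : fderiv ℝ π' p' (h + k) = 0 := hu2
      have hhπ : fderiv ℝ π' p' h = 0 := by
        rw [map_add, hkπ, add_zero] at huπ; exact huπ
      have hhφ : fderiv ℝ φ p' h = 0 := hsymb p' h hh hhπ
      show fderiv ℝ φ p' (h + k) = 0
      rw [map_add, hhφ, hk0, add_zero]
    · exact le_inf le_sup_right (kerle p')
  refine ⟨?_, trans, symbEq, ?_, ?_, ?_⟩
  · refine ⟨Module.finrank ℝ M + (Module.finrank ℝ P' - Module.finrank ℝ P), fun p' => ?_⟩
    have e1 := Submodule.finrank_sup_add_finrank_inf_eq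
      (H' p' ⊔ LinearMap.ker (fderiv ℝ φ p' : P' →ₗ[ℝ] P)) (LinearMap.ker (fderiv ℝ π' p' : P' →ₗ[ℝ] M))
    rw [trans p', symbEq p', finrank_top] at e1
    have e2 := LinearMap.finrank_range_add_finrank_ker
      ((fderiv ℝ φ p' : P' →L[ℝ] P) : P' →ₗ[ℝ] P)
    have e3 := LinearMap.finrank_range_add_finrank_ker
      ((fderiv ℝ π' p' : P' →L[ℝ] M) : P' →ₗ[ℝ] M)
    have r2 : LinearMap.range ((fderiv ℝ φ p' : P' →L[ℝ] P) : P' →ₗ[ℝ] P) = ⊤ :=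
      LinearMap.range_eq_top.2 (hφsub p')
    have r3 : LinearMap.range ((fderiv ℝ π' p' : P' →L[ℝ] M) : P' →ₗ[ℝ] M) = ⊤ :=
      LinearMap.range_eq_top.2 (hP'.2.2.1 p')
    have k2 : LinearMap.ker ((fderiv ℝ φ p' : P' →L[ℝ] P) : P' →ₗ[ℝ] P)
        = LinearMap.ker (fderiv ℝ φ p' : P' →ₗ[ℝ] P) := rfl
    have k3 : LinearMap.ker ((fderiv ℝ π' p' : P' →L[ℝ] M) : P' →ₗ[ℝ] M)
        = LinearMap.ker (fderiv ℝ π' p' : P' →ₗ[ℝ] M) := rfl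
    rw [r2, finrank_top, k2] at e2
    rw [r3, finrank_top, k3] at e3
    omega
  · intro X Y hX hY hXk hYk p'
    exact LinearMap.mem_ker.mpr
      (ker_brack φ hφ X Y hX hY (fun p => hXk p) (fun p => hYk p) p')
  · intro p' u hu
    obtain ⟨h, hh, k, hk, rfl⟩ := Submodule.mem_sup.mp hu
    have hk0 : fderiv ℝ φ p' k = 0 := hk
    rw [map_add, hk0, add_zero]
    exact hmor p' h hh
  · intro p' u v hu hv U W hU hW hUH hWH hUval hWval
    obtain ⟨h₁, hh₁, k₁, hk₁, rfl⟩ := Submodule.mem_sup.mp hu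
    obtain ⟨h₂, hh₂, k₂, hk₂, rfl⟩ := Submodule.mem_sup.mp hv
    have hk₁0 : fderiv ℝ φ p' k₁ = 0 := hk₁
    have hk₂0 : fderiv ℝ φ p' k₂ = 0 := hk₂
    refine hcurv p' h₁ h₂ hh₁ hh₂ U W hU hW hUH hWH ?_ ?_
    · rw [hUval, map_add, hk₁0, add_zero]
    · rw [hWval, map_add, hk₂0, add_zero]
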